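/- Let X_1,…,X_J ⊂ ℝ^d be compact, μ_i Borel probability measures on X_i, c : X_1 × ⋯ × X_J → ℝ continuous, and ε > 0. For each j define T_j from the product Banach space C(X_1) × ⋯ × C(X_J) (each factor with the supremum norm) to C(X_j) by T_j(φ)(x_j) = ∫ exp((Σ_{i=1}^J φ_i(x_i) − c(x))/ε) d(⊗_{i≠j} μ_i)(x_{−j}). Then T_j is Fréchet differentiable at every φ, with derivative T_j'(φ)(u)(x_j) = (1/ε) ∫ exp((Σ_{i=1}^J φ_i(x_i) − c(x))/ε) · (Σ_{i=1}^J u_i(x_i)) d(⊗_{i≠j} μ_i)(x_{−j}) for u = (u_1,…,u_J) in C(X_1) × ⋯ × C(X_J), where the sum Σ_i u_i(x_i) includes the term u_j(x_j). -/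
import Mathlib


open MeasureTheory

/-- Glue a point `xj` in coordinate `j` together with a point `y` of the remaining
coordinates into a full configuration. -/
def glue {J : ℕ} (X : Fin J → Type*) (j : Fin J) (xj : X j)
    (y : (i : {i : Fin J // i ≠ j}) → X i.1) (i : Fin J) : X i :=
  if h : i = j then cast (congrArg X h.symm) xj else y ⟨i, h⟩

section Aux
variable {d J : ℕ} (X : Fin J → Set (Fin d → ℝ)) (j : Fin J)

@[simp] lemma glue_apply_self (xj : X j) (y : (i : {i : Fin J // i ≠ j}) → X i.1) :
    glue (fun i => X i) j xj y j = xj := by simp [glue]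

@[simp] lemma glue_apply_ne {i : Fin J} (h : i ≠ j) (xj : X j)
    (y : (k : {k : Fin J // k ≠ j}) → X k.1) :
    glue (fun i => X i) j xj y i = y ⟨i, h⟩ := by simp [glue, h]

lemma continuous_glue (i : Fin J) :
    Continuous (fun z : X j × ((k : {k : Fin J // k ≠ j}) → X k.1) =>
      glue (fun i => X i) j z.1 z.2 i) := by
  by_cases h : i = j
  · subst h; simp only [glue_apply_self]; exact continuous_fst
  · simp only [glue_apply_ne X j h]; exact (continuous_apply _).comp continuous_snd
end Aux

/-- The Schrödinger first-order-condition operator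
`T_j(φ)(x_j) = ∫ exp((∑_i φ_i(x_i) - c(x))/ε) d(⊗_{i≠j}μ_i)(x_{-j})`, viewed as a map
from `C(X_1) × ⋯ × C(X_J)` to `C(X_j)`, is Fréchet differentiable at every `φ`, with
derivative `T_j'(φ)(u)(x_j) = (1/ε) ∫ exp((∑_i φ_i(x_i) - c(x))/ε) · (∑_i u_i(x_i))
d(⊗_{i≠j}μ_i)(x_{-j})` (the sums over `i` include the term `i = j`). -/
theorem schrodinger_operator_hasFDerivAt
    {d J : ℕ}
    (X : Fin J → Set (Fin d → ℝ)) [∀ j, CompactSpace (X j)]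
    (μ : (i : Fin J) → Measure (X i)) [∀ i, IsProbabilityMeasure (μ i)]
    (c : ((i : Fin J) → X i) → ℝ) (hc : Continuous c)
    (ε : ℝ) (hε : 0 < ε) (j : Fin J)
    (Tj : ((i : Fin J) → C(X i, ℝ)) → C(X j, ℝ))
    (hTj : ∀ (ψ : (i : Fin J) → C(X i, ℝ)) (xj : X j),
      Tj ψ xj =
        ∫ y, Real.exp (((∑ i, ψ i (glue (fun i => X i) j xj y i)) -
            c (glue (fun i => X i) j xj y)) / ε)
          ∂(Measure.pi fun i : {i : Fin J // i ≠ j} => μ i.1))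
    (φ : (i : Fin J) → C(X i, ℝ)) :
    ∃ D : ((i : Fin J) → C(X i, ℝ)) →L[ℝ] C(X j, ℝ),
      HasFDerivAt Tj D φ ∧
      ∀ (u : (i : Fin J) → C(X i, ℝ)) (xj : X j),
        D u xj = (1 / ε) *
          ∫ y, Real.exp (((∑ i, φ i (glue (fun i => X i) j xj y i)) -
              c (glue (fun i => X i) j xj y)) / ε) *
              (∑ i, u i (glue (fun i => X i) j xj y i))
            ∂(Measure.pi fun i : {i : Fin J // i ≠ j} => μ i.1) := by
  classical
  have hεne : ε ≠ 0 := hε.ne'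
  have hne : ∀ i, Nonempty (X i) := by
    intro i
    by_contra h
    have h1 : (Set.univ : Set (X i)) = ∅ := Set.univ_eq_empty_iff.mpr (not_nonempty_iff.mp h)
    have h2 : (μ i) Set.univ = 1 := measure_univ
    rw [h1, measure_empty] at h2
    exact zero_ne_one h2
  haveI : ∀ i, Nonempty (X i) := hne
  set ν : Measure ((k : {k : Fin J // k ≠ j}) → X k.1) :=
    Measure.pi fun i : {i : Fin J // i ≠ j} => μ i.1 with hνdef
  haveI : IsProbabilityMeasure ν := by infer_instance
  have hgc : ∀ i, Continuous fun z : X j × ((k : {k : Fin J // k ≠ j}) → X k.1) =>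
      glue (fun i => X i) j z.1 z.2 i := continuous_glue X j
  -- the sum map
  let A : ((i : Fin J) → C(X i, ℝ)) → C(X j × ((k : {k : Fin J // k ≠ j}) → X k.1), ℝ) :=
    fun ψ => ⟨fun z => ∑ i, ψ i (glue (fun i => X i) j z.1 z.2 i),
      continuous_finset_sum _ fun i _ => (ψ i).continuous.comp (hgc i)⟩
  have hA_apply : ∀ ψ z, A ψ z = ∑ i, ψ i (glue (fun i => X i) j z.1 z.2 i) := fun _ _ => rfl
  -- the kernel
  let K : C(X j × ((k : {k : Fin J // k ≠ j}) → X k.1), ℝ) :=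
    ⟨fun z => Real.exp ((A φ z - c (glue (fun i => X i) j z.1 z.2)) / ε),
      Real.continuous_exp.comp (((A φ).continuous.sub (hc.comp (continuous_pi hgc))).div_const ε)⟩
  have hA_bound : ∀ (u) (z : X j × ((k : {k : Fin J // k ≠ j}) → X k.1)),
      ‖A u z‖ ≤ (J : ℝ) * ‖u‖ := by
    intro u z
    calc ‖∑ i, u i (glue (fun i => X i) j z.1 z.2 i)‖
        ≤ ∑ i, ‖u i (glue (fun i => X i) j z.1 z.2 i)‖ := norm_sum_le _ _
      _ ≤ ∑ _i : Fin J, ‖u‖ := Finset.sum_le_sum fun i _ =>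
          le_trans ((u i).norm_coe_le_norm _) (norm_le_pi_norm u i)
      _ = (J : ℝ) * ‖u‖ := by simp [Finset.sum_const, Finset.card_univ, nsmul_eq_mul]
  -- integrability and parametrized continuity
  have hint : ∀ (f : C(X j × ((k : {k : Fin J // k ≠ j}) → X k.1), ℝ)) (x : X j),
      Integrable (fun y => f (x, y)) ν := fun f x =>
    (integrable_const ‖f‖).mono'
      ((f.continuous.comp (Continuous.prodMk_right x)).aestronglyMeasurable)
      (ae_of_all _ fun y => f.norm_coe_le_norm (x, y))
  have hcint : ∀ f : C(X j × ((k : {k : Fin J // k ≠ j}) → X k.1), ℝ),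
      Continuous fun x : X j => ∫ y, f (x, y) ∂ν := by
    intro f
    apply continuous_of_dominated (bound := fun _ => ‖f‖)
    · exact fun x => (f.continuous.comp (Continuous.prodMk_right x)).aestronglyMeasurable
    · exact fun x => ae_of_all _ fun y => f.norm_coe_le_norm (x, y)
    · exact integrable_const _
    · exact ae_of_all _ fun y => f.continuous.comp (continuous_id.prodMk continuous_const)
  -- the candidate derivative as a function
  let Dfun : ((i : Fin J) → C(X i, ℝ)) → C(X j, ℝ) := fun u =>
    ⟨fun x => (1 / ε) * ∫ y, (K * A u) (x, y) ∂ν, continuous_const.mul (hcint (K * A u))⟩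
  have hA_add : ∀ u v, A (u + v) = A u + A v := by
    intro u v; ext z
    simp [A, Finset.sum_add_distrib]
  have hA_smul : ∀ (r : ℝ) u, A (r • u) = r • A u := by
    intro r u; ext z
    simp [A, Finset.mul_sum]
  have hD_add : ∀ u v, Dfun (u + v) = Dfun u + Dfun v := by
    intro u v; ext x
    simp only [Dfun, ContinuousMap.coe_mk, ContinuousMap.add_apply]
    have h1 : (fun y => (K * A (u + v)) (x, y))
        = fun y => (K * A u) (x, y) + (K * A v) (x, y) := by
      funext y
      simp [hA_add, mul_add]
    rw [h1, integral_add (hint _ x) (hint _ x), mul_add]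
  have hD_smul : ∀ (r : ℝ) u, Dfun (r • u) = r • Dfun u := by
    intro r u; ext x
    simp only [Dfun, ContinuousMap.coe_mk, ContinuousMap.smul_apply, smul_eq_mul]
    have h1 : (fun y => (K * A (r • u)) (x, y)) = fun y => r * (K * A u) (x, y) := by
      funext y
      simp [hA_smul]
      try ring
    rw [h1, integral_const_mul]
    ring
  let DL : ((i : Fin J) → C(X i, ℝ)) →ₗ[ℝ] C(X j, ℝ) :=
    { toFun := Dfun, map_add' := hD_add, map_smul' := hD_smul }
  have hDbound : ∀ u, ‖DL u‖ ≤ (1 / ε * ‖K‖ * J) * ‖u‖ := by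
    intro u
    have hC : (0:ℝ) ≤ (1 / ε * ‖K‖ * J) * ‖u‖ := by positivity
    rw [ContinuousMap.norm_le _ hC]
    intro x
    show ‖(1 / ε) * ∫ y, (K * A u) (x, y) ∂ν‖ ≤ _
    rw [norm_mul]
    have h1 : ‖∫ y, (K * A u) (x, y) ∂ν‖ ≤ (‖K‖ * ((J : ℝ) * ‖u‖)) * (ν Set.univ).toReal := by
      apply norm_integral_le_of_norm_le_const
      apply ae_of_all
      intro y
      show ‖K (x, y) * A u (x, y)‖ ≤ _
      rw [norm_mul]
      exact mul_le_mul (K.norm_coe_le_norm _) (hA_bound u (x, y)) (norm_nonneg _) (norm_nonneg _)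
    have h2 : (ν Set.univ).toReal = 1 := by simp
    rw [h2, mul_one] at h1
    have h3 : ‖(1:ℝ) / ε‖ = 1 / ε := abs_of_pos (by positivity)
    rw [h3]
    calc 1 / ε * ‖∫ y, (K * A u) (x, y) ∂ν‖ ≤ 1 / ε * (‖K‖ * ((J : ℝ) * ‖u‖)) :=
          mul_le_mul_of_nonneg_left h1 (by positivity)
      _ = (1 / ε * ‖K‖ * J) * ‖u‖ := by ring
  refine ⟨LinearMap.mkContinuous DL (1 / ε * ‖K‖ * J) hDbound, ?_, ?_⟩
  · -- differentiability
    rw [hasFDerivAt_iff_isLittleO_nhds_zero]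
    rw [Asymptotics.isLittleO_iff]
    intro δ hδ
    rw [Metric.eventually_nhds_iff]
    set C₂ : ℝ := ‖K‖ * ((J : ℝ) / ε) ^ 2 with hC₂def
    have hC₂ : 0 ≤ C₂ := by positivity
    refine ⟨min (ε / (J + 1)) (δ / (C₂ + 1)), by positivity, ?_⟩
    intro u hu
    rw [dist_zero_right] at hu
    have hu1 : ‖u‖ ≤ ε / (J + 1) := le_of_lt (lt_of_lt_of_le hu (min_le_left _ _))
    have hu2 : ‖u‖ ≤ δ / (C₂ + 1) := le_of_lt (lt_of_lt_of_le hu (min_le_right _ _))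
    -- |A u z / ε| ≤ 1
    have ht1 : ∀ z, |A u z / ε| ≤ 1 := by
      intro z
      rw [abs_div, abs_of_pos hε, div_le_one hε]
      calc |A u z| ≤ (J : ℝ) * ‖u‖ := hA_bound u z
        _ ≤ (J : ℝ) * (ε / (J + 1)) := by
            apply mul_le_mul_of_nonneg_left hu1 (by positivity)
        _ ≤ ε := by
            have h7 : (J : ℝ) / (J + 1) ≤ 1 := by
              rw [div_le_one (by positivity)]; linarith
            calc (J : ℝ) * (ε / (J + 1)) = ε * ((J : ℝ) / (J + 1)) := by ring
              _ ≤ ε * 1 := mul_le_mul_of_nonneg_left h7 hε.le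
              _ = ε := mul_one ε
    have htb : ∀ z, |A u z / ε| ≤ (J : ℝ) / ε * ‖u‖ := by
      intro z
      rw [abs_div, abs_of_pos hε, div_mul_eq_mul_div, div_le_div_iff_of_pos_right hε]
      exact hA_bound u z
    -- exponential continuous map
    let Exu : C(X j × ((k : {k : Fin J // k ≠ j}) → X k.1), ℝ) :=
      ⟨fun z => Real.exp (A u z / ε), Real.continuous_exp.comp ((A u).continuous.div_const ε)⟩
    -- pointwise remainder bound
    have hpt : ∀ z, ‖(K * Exu) z - K z - ((1 / ε) • (K * A u)) z‖ ≤ C₂ * ‖u‖ ^ 2 := by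
      intro z
      have he : (K * Exu) z - K z - ((1 / ε) • (K * A u)) z
          = K z * (Real.exp (A u z / ε) - 1 - A u z / ε) := by
        show K z * Exu z - K z - (1 / ε) * (K z * A u z) = _
        show K z * Real.exp (A u z / ε) - K z - (1 / ε) * (K z * A u z) = _
        field_simp
      rw [he, norm_mul]
      have h1 : ‖Real.exp (A u z / ε) - 1 - A u z / ε‖ ≤ (A u z / ε) ^ 2 :=
        Real.abs_exp_sub_one_sub_id_le (ht1 z)
      have h2 : (A u z / ε) ^ 2 ≤ ((J : ℝ) / ε * ‖u‖) ^ 2 := by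
        rw [← sq_abs]
        apply pow_le_pow_left₀ (abs_nonneg _) (htb z)
      calc ‖K z‖ * ‖Real.exp (A u z / ε) - 1 - A u z / ε‖
          ≤ ‖K‖ * ((J : ℝ) / ε * ‖u‖) ^ 2 :=
            mul_le_mul (K.norm_coe_le_norm z) (le_trans h1 h2) (norm_nonneg _) (norm_nonneg _)
        _ = C₂ * ‖u‖ ^ 2 := by rw [hC₂def]; ring
    -- express the remainder as one integral
    have hsplit : ∀ x : X j, Tj (φ + u) x - Tj φ x - Dfun u x
        = ∫ y, ((K * Exu) (x, y) - K (x, y) - ((1 / ε) • (K * A u)) (x, y)) ∂ν := by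
      intro x
      rw [hTj, hTj]
      have h1 : (fun y => Real.exp (((∑ i, (φ + u) i (glue (fun i => X i) j x y i)) -
          c (glue (fun i => X i) j x y)) / ε)) = fun y => (K * Exu) (x, y) := by
        funext y
        show _ = K (x, y) * Real.exp (A u (x, y) / ε)
        show _ = Real.exp ((A φ (x, y) - c (glue (fun i => X i) j x y)) / ε)
            * Real.exp (A u (x, y) / ε)
        rw [← Real.exp_add]
        congr 1
        have hsum : ∑ i, (φ + u) i (glue (fun i => X i) j x y i)
            = (∑ i, φ i (glue (fun i => X i) j x y i))
              + ∑ i, u i (glue (fun i => X i) j x y i) := by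
          rw [← Finset.sum_add_distrib]
          apply Finset.sum_congr rfl
          intro i _
          simp
        rw [hsum, hA_apply, hA_apply]
        ring
      have h2 : (fun y => Real.exp (((∑ i, φ i (glue (fun i => X i) j x y i)) -
          c (glue (fun i => X i) j x y)) / ε)) = fun y => K (x, y) := rfl
      rw [h1, h2]
      have h3 : Dfun u x = ∫ y, ((1 / ε) • (K * A u)) (x, y) ∂ν := by
        show (1 / ε) * ∫ y, (K * A u) (x, y) ∂ν = _
        rw [← integral_const_mul]
        rfl
      have h12 : Integrable (fun y => (K * Exu) (x, y) - K (x, y)) ν :=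
        (hint (K * Exu) x).sub (hint K x)
      rw [h3, ← integral_sub (hint (K * Exu) x) (hint K x),
        ← integral_sub h12 (hint ((1 / ε) • (K * A u)) x)]
    -- final norm estimate
    have hgoal : ‖Tj (φ + u) - Tj φ - LinearMap.mkContinuous DL (1 / ε * ‖K‖ * J) hDbound u‖
        ≤ δ * ‖u‖ := by
      have hδu : (0:ℝ) ≤ δ * ‖u‖ := mul_nonneg hδ.le (norm_nonneg _)
      rw [ContinuousMap.norm_le _ hδu]
      intro x
      have happ : (Tj (φ + u) - Tj φ - LinearMap.mkContinuous DL (1 / ε * ‖K‖ * J) hDbound u) x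
          = Tj (φ + u) x - Tj φ x - Dfun u x := by
        simp [ContinuousMap.sub_apply]
        rfl
      rw [happ, hsplit x]
      have h4 : ‖∫ y, ((K * Exu) (x, y) - K (x, y) - ((1 / ε) • (K * A u)) (x, y)) ∂ν‖
          ≤ (C₂ * ‖u‖ ^ 2) * (ν Set.univ).toReal :=
        norm_integral_le_of_norm_le_const (ae_of_all _ fun y => hpt (x, y))
      have h5 : (ν Set.univ).toReal = 1 := by simp
      rw [h5, mul_one] at h4
      refine le_trans h4 ?_
      have h6 : C₂ * ‖u‖ ≤ δ := by
        calc C₂ * ‖u‖ ≤ C₂ * (δ / (C₂ + 1)) := mul_le_mul_of_nonneg_left hu2 hC₂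
          _ ≤ δ := by
              have h7 : C₂ / (C₂ + 1) ≤ 1 := by
                rw [div_le_one (by positivity)]; linarith
              calc C₂ * (δ / (C₂ + 1)) = δ * (C₂ / (C₂ + 1)) := by ring
                _ ≤ δ * 1 := mul_le_mul_of_nonneg_left h7 hδ.le
                _ = δ := mul_one δ
      calc C₂ * ‖u‖ ^ 2 = (C₂ * ‖u‖) * ‖u‖ := by ring
        _ ≤ δ * ‖u‖ := mul_le_mul_of_nonneg_right h6 (norm_nonneg _)
    exact hgoal
  · intro u xj
    rfl
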